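/- arXiv:2006.04574 — 2 statements merged into one kernel-verified Lean document; each statement's English description precedes it below -/
import Mathlib

section
/- Let F be a finite nonempty set and let v : Finset F → ℝ be a positive cooperative game. Suppose χ assigns to every nonempty subset S ⊆ F and every j ∈ S a positive real number χ(S, j) such that: (i) geometric efficiency holds on every subset, i.e. v(∅) · ∏_{j ∈ S} χ(S, j) = v(S) for every nonempty S ⊆ F; and (ii) χ preserves ratios, i.e. for every S ⊆ F and all distinct j₁, j₂ ∈ S, χ(S, j₁)/χ(S \ {j₂}, j₁) = χ(S, j₂)/χ(S \ {j₁}, j₂). Then χ is uniquely determined: for every nonempty S ⊆ F and j ∈ S, χ(S, j) = exp( Σ_{c ⊆ S \ {j}} (|c|!·(|S|−|c|−1)!/|S|!) · (log v(c ∪ {j}) − log v(c)) ). -/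
/-- The multiplicative Shapley value of feature `j` computed within the coalition `S`
for the game `v`. -/
noncomputable def multShapley {F : Type*} [DecidableEq F]
    (v : Finset F → ℝ) (S : Finset F) (j : F) : ℝ :=
  Real.exp (∑ c ∈ (S.erase j).powerset,
    ((Nat.factorial c.card * Nat.factorial (S.card - c.card - 1) : ℝ) /
      Nat.factorial S.card) *
    (Real.log (v (insert j c)) - Real.log (v c)))

/-!
Taking logarithms turns geometric efficiency and ratio preservation into additive efficiency and
balanced contributions for `f S j = log (χ S j)` and the game `w = log ∘ v`. Summing balanced
contributions over the other players of `S` and using efficiency on `S` and on `S.erase j` gives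
`|S| f S j = w S - w (S.erase j) + ∑ k ∈ S.erase j, f (S.erase k) j`, which determines `f` by
induction on `S`. The additive Shapley value satisfies the same recursion, by a direct
computation with its weights `k! (n - k - 1)! / n!`.
-/

open Finset Nat

section Shapley

variable {F : Type*} [DecidableEq F]

noncomputable def shapleyWeight (n k : ℕ) : ℝ := (k ! * (n - k - 1)! : ℝ) / n !

noncomputable def shapleyValue (w : Finset F → ℝ) (S : Finset F) (j : F) : ℝ :=
  ∑ c ∈ (S.erase j).powerset, shapleyWeight S.card c.card * (w (insert j c) - w c)

/-- The recursive formula of Hart and Mas-Colell for the Shapley value. -/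
def IsShapleyRecursive (w : Finset F → ℝ) (f : Finset F → F → ℝ) : Prop :=
  ∀ S, ∀ j ∈ S, (S.card : ℝ) * f S j = w S - w (S.erase j) + ∑ k ∈ S.erase j, f (S.erase k) j

theorem multShapley_eq_exp_shapleyValue (v : Finset F → ℝ) (S : Finset F) (j : F) :
    multShapley v S j = Real.exp (shapleyValue (fun c => Real.log (v c)) S j) := rfl

theorem succ_mul_shapleyWeight_succ {m k : ℕ} (hk : k ≤ m) :
    (m + 1 : ℝ) * shapleyWeight (m + 1) k =
      (m - k : ℕ) * shapleyWeight m k + if k = m then 1 else 0 := by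
  have hm : (m + 1 : ℝ) * shapleyWeight (m + 1) k = (k ! * (m - k)! : ℝ) / m ! := by
    rw [shapleyWeight, factorial_succ, show m + 1 - k - 1 = m - k by omega]
    push_cast
    field_simp
  rw [hm, shapleyWeight]
  split_ifs with h
  · subst h
    simp [factorial_ne_zero]
  · rw [← mul_factorial_pred (show m - k ≠ 0 by omega), show m - k - 1 = m - 1 - k by omega]
    push_cast
    ring

theorem sum_shapleyValue_erase (w : Finset F → ℝ) (S : Finset F) (j : F) :
    ∑ k ∈ S.erase j, shapleyValue w (S.erase k) j =
      ∑ c ∈ (S.erase j).powerset, ((S.erase j).card - c.card : ℕ) *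
        (shapleyWeight (S.card - 1) c.card * (w (insert j c) - w c)) := by
  set T := S.erase j
  have hterm : ∀ k ∈ T, shapleyValue w (S.erase k) j = ∑ c ∈ T.powerset,
      if k ∈ c then 0 else shapleyWeight (S.card - 1) c.card * (w (insert j c) - w c) := by
    intro k hk
    have herase : (S.erase k).erase j = T.erase k := erase_right_comm
    have hpowerset : (T.erase k).powerset = T.powerset.filter (k ∉ ·) := by
      ext c
      simp only [mem_powerset, subset_erase, mem_filter]
    rw [shapleyValue, herase, hpowerset, sum_filter, card_erase_of_mem (mem_of_mem_erase hk)]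
    simp only [ite_not]
  rw [sum_congr rfl hterm, sum_comm]
  refine sum_congr rfl fun c hc => ?_
  rw [sum_ite, sum_const_zero, zero_add, sum_const, nsmul_eq_mul, ← sdiff_eq_filter,
    card_sdiff_of_subset (mem_powerset.1 hc)]

theorem isShapleyRecursive_shapleyValue (w : Finset F → ℝ) :
    IsShapleyRecursive w (shapleyValue w) := by
  intro S j hj
  set T := S.erase j
  have hS : S.card = T.card + 1 := (card_erase_add_one hj).symm
  have hweight : ∀ c ∈ T.powerset, (S.card : ℝ) * (shapleyWeight S.card c.card *
      (w (insert j c) - w c)) = (T.card - c.card : ℕ) * (shapleyWeight (S.card - 1) c.card *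
        (w (insert j c) - w c)) + if c = T then w (insert j c) - w c else 0 := by
    intro c hc
    have hcT := mem_powerset.1 hc
    have hcard : c.card = T.card ↔ c = T :=
      ⟨fun h => eq_of_subset_of_card_le hcT h.ge, fun h => h ▸ rfl⟩
    rw [hS, Nat.add_sub_cancel, ← mul_assoc, cast_succ,
      succ_mul_shapleyWeight_succ (card_le_card hcT), add_mul, mul_assoc]
    simp only [hcard, ite_mul, one_mul, zero_mul]
  rw [shapleyValue, mul_sum, sum_congr rfl hweight, sum_add_distrib, sum_ite_eq',
    if_pos (mem_powerset_self T), insert_erase hj, sum_shapleyValue_erase]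
  ring

theorem IsShapleyRecursive.unique {w : Finset F → ℝ} {f g : Finset F → F → ℝ}
    (hf : IsShapleyRecursive w f) (hg : IsShapleyRecursive w g) :
    ∀ S, ∀ j ∈ S, f S j = g S j := by
  intro S
  induction S using Finset.strongInduction with
  | H S ih =>
    intro j hj
    have hsmaller : ∀ k ∈ S.erase j, f (S.erase k) j = g (S.erase k) j := fun k hk =>
      ih _ (erase_ssubset (mem_of_mem_erase hk)) j (mem_erase.2 ⟨(ne_of_mem_erase hk).symm, hj⟩)
    have h := hf S j hj
    rw [sum_congr rfl hsmaller, ← hg S j hj] at h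
    exact mul_left_cancel₀ (cast_ne_zero.2 (card_ne_zero_of_mem hj)) h

theorem isShapleyRecursive_of_efficient_of_balanced {w : Finset F → ℝ} {f : Finset F → F → ℝ}
    (heff : ∀ S, ∑ i ∈ S, f S i = w S - w ∅)
    (hbal : ∀ S, ∀ j₁ ∈ S, ∀ j₂ ∈ S, j₁ ≠ j₂ →
      f S j₁ - f (S.erase j₂) j₁ = f S j₂ - f (S.erase j₁) j₂) :
    IsShapleyRecursive w f := by
  intro S j hj
  have hsum : ∑ k ∈ S.erase j, (f S j - f (S.erase k) j) =
      ∑ k ∈ S.erase j, (f S k - f (S.erase j) k) :=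
    sum_congr rfl fun k hk => hbal S j hj k (mem_of_mem_erase hk) (ne_of_mem_erase hk).symm
  rw [sum_sub_distrib, sum_sub_distrib, sum_const, nsmul_eq_mul, card_erase_of_mem hj,
    cast_pred (card_pos.2 ⟨j, hj⟩), sum_erase_eq_sub (f := f S) hj, heff, heff] at hsum
  linear_combination hsum

end Shapley

theorem xshap_uniqueness_general
    {F : Type*} [DecidableEq F]
    (v : Finset F → ℝ) (hv : ∀ S : Finset F, 0 < v S)
    (χ : Finset F → F → ℝ)
    (hpos : ∀ S : Finset F, S.Nonempty → ∀ j ∈ S, 0 < χ S j)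
    (heff : ∀ S : Finset F, S.Nonempty → v ∅ * ∏ j ∈ S, χ S j = v S)
    (hratio : ∀ S : Finset F, ∀ j₁ ∈ S, ∀ j₂ ∈ S, j₁ ≠ j₂ →
      χ S j₁ / χ (S.erase j₂) j₁ = χ S j₂ / χ (S.erase j₁) j₂) :
    ∀ S : Finset F, S.Nonempty → ∀ j ∈ S, χ S j = multShapley v S j := by
  have hlogEff : ∀ S : Finset F,
      ∑ i ∈ S, Real.log (χ S i) = Real.log (v S) - Real.log (v ∅) := by
    intro S
    rcases S.eq_empty_or_nonempty with rfl | hS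
    · simp
    · rw [← heff S hS, Real.log_mul (hv ∅).ne' (prod_pos (hpos S hS)).ne',
        Real.log_prod fun i hi => (hpos S hS i hi).ne']
      ring
  have hlogBal : ∀ S : Finset F, ∀ j₁ ∈ S, ∀ j₂ ∈ S, j₁ ≠ j₂ →
      Real.log (χ S j₁) - Real.log (χ (S.erase j₂) j₁) =
        Real.log (χ S j₂) - Real.log (χ (S.erase j₁) j₂) := by
    intro S j₁ h₁ j₂ h₂ hne
    have h₁' : j₁ ∈ S.erase j₂ := mem_erase.2 ⟨hne, h₁⟩
    have h₂' : j₂ ∈ S.erase j₁ := mem_erase.2 ⟨hne.symm, h₂⟩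
    rw [← Real.log_div (hpos S ⟨j₁, h₁⟩ j₁ h₁).ne' (hpos _ ⟨j₁, h₁'⟩ j₁ h₁').ne',
      ← Real.log_div (hpos S ⟨j₂, h₂⟩ j₂ h₂).ne' (hpos _ ⟨j₂, h₂'⟩ j₂ h₂').ne',
      hratio S j₁ h₁ j₂ h₂ hne]
  intro S hS j hj
  have hlog := (isShapleyRecursive_of_efficient_of_balanced hlogEff hlogBal).unique
    (isShapleyRecursive_shapleyValue _) S j hj
  rw [multShapley_eq_exp_shapleyValue, ← hlog, Real.exp_log (hpos S hS j hj)]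

/-- **Uniqueness part of Theorem 1**: any assignment `χ` of positive contributions that
is geometrically efficient on every nonempty subset and preserves ratios must equal the
multiplicative Shapley values. -/
theorem xshap_uniqueness
    {F : Type*} [Fintype F] [DecidableEq F] [Nonempty F]
    (v : Finset F → ℝ) (hv : ∀ S : Finset F, 0 < v S)
    (χ : Finset F → F → ℝ)
    (hpos : ∀ S : Finset F, S.Nonempty → ∀ j ∈ S, 0 < χ S j)
    (heff : ∀ S : Finset F, S.Nonempty → v ∅ * ∏ j ∈ S, χ S j = v S)
    (hratio : ∀ S : Finset F, ∀ j₁ ∈ S, ∀ j₂ ∈ S, j₁ ≠ j₂ →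
      χ S j₁ / χ (S.erase j₂) j₁ = χ S j₂ / χ (S.erase j₁) j₂) :
    ∀ S : Finset F, S.Nonempty → ∀ j ∈ S, χ S j = multShapley v S j :=
  xshap_uniqueness_general v hv χ hpos heff hratio
end

section
/- Let F be a finite set and let v : Finset F → ℝ be any cooperative game. For every nonempty subset S ⊆ F and j ∈ S, let φ^j(v, S) = Σ_{c ⊆ S \ {j}} (|c|!·(|S|−|c|−1)!/|S|!) · (v(c ∪ {j}) − v(c)) be the additive Shapley value computed within S. Then the additive Shapley values preserve differences (balanced contributions): for every S ⊆ F and all distinct j₁, j₂ ∈ S, φ^{j₁}(v, S) − φ^{j₁}(v, S \ {j₂}) = φ^{j₂}(v, S) − φ^{j₂}(v, S \ {j₁}). -/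
/-- The additive Shapley value of feature `j` computed within the coalition `S` for
the game `v`:
`φ^j(v, S) = ∑_{c ⊆ S \ {j}} (|c|!·(|S|−|c|−1)!/|S|!)·(v(c ∪ {j}) − v(c))`. -/
noncomputable def addShapley {F : Type*} [DecidableEq F]
    (v : Finset F → ℝ) (S : Finset F) (j : F) : ℝ :=
  ∑ c ∈ (S.erase j).powerset,
    ((Nat.factorial c.card * Nat.factorial (S.card - c.card - 1) : ℝ) /
      Nat.factorial S.card) *
    (v (insert j c) - v c)

/-- Key factorial-coefficient identity: `w_n(k) − w_{n−1}(k) = −w_n(k+1)` where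
`w_n(k) = k!(n−k−1)!/n!`, written with `n = k + 2 + m`. -/
lemma coeff_id (k m : ℕ) :
    (Nat.factorial k * Nat.factorial (m + 1) : ℝ) / Nat.factorial (k + 2 + m)
      - (Nat.factorial k * Nat.factorial m) / Nat.factorial (k + 1 + m)
    = -((Nat.factorial (k + 1) * Nat.factorial m) / Nat.factorial (k + 2 + m)) := by
  have h1 : (Nat.factorial (k + 2 + m) : ℝ) = (k + 2 + m) * Nat.factorial (k + 1 + m) := by
    rw [show k + 2 + m = (k + 1 + m) + 1 from by ring, Nat.factorial_succ]
    push_cast; ring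
  have h2 : (Nat.factorial (m + 1) : ℝ) = (m + 1) * Nat.factorial m := by
    rw [Nat.factorial_succ]; push_cast; ring
  have h3 : (Nat.factorial (k + 1) : ℝ) = (k + 1) * Nat.factorial k := by
    rw [Nat.factorial_succ]; push_cast; ring
  have p1 : (Nat.factorial (k + 1 + m) : ℝ) ≠ 0 :=
    Nat.cast_ne_zero.mpr (Nat.factorial_ne_zero _)
  have p0 : ((k : ℝ) + 2 + m) ≠ 0 := by positivity
  rw [h1, h2, h3]
  field_simp
  ring

/-- **Balanced contributions (difference preservation) of additive Shapley values**:
for every `S ⊆ F` and distinct `j₁, j₂ ∈ S`,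
`φ^{j₁}(v,S) − φ^{j₁}(v,S\{j₂}) = φ^{j₂}(v,S) − φ^{j₂}(v,S\{j₁})`. -/
theorem shapley_preserves_differences
    {F : Type*} [Fintype F] [DecidableEq F]
    (v : Finset F → ℝ)
    (S : Finset F) (j₁ j₂ : F) (h₁ : j₁ ∈ S) (h₂ : j₂ ∈ S) (hne : j₁ ≠ j₂) :
    addShapley v S j₁ - addShapley v (S.erase j₂) j₁ =
      addShapley v S j₂ - addShapley v (S.erase j₁) j₂ := by
  classical
  set T := (S.erase j₁).erase j₂ with hTdef
  have hj2T : j₂ ∉ T := Finset.notMem_erase _ _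
  have hj1T : j₁ ∉ T := by
    simp [hTdef, Finset.mem_erase]
  have hmem2 : j₂ ∈ S.erase j₁ := Finset.mem_erase.mpr ⟨hne.symm, h₂⟩
  have hmem1 : j₁ ∈ S.erase j₂ := Finset.mem_erase.mpr ⟨hne, h₁⟩
  have hS1 : S.erase j₁ = insert j₂ T := (Finset.insert_erase hmem2).symm
  have hE : (S.erase j₂).erase j₁ = T := Finset.erase_right_comm
  have hS2 : S.erase j₂ = insert j₁ T := by
    rw [← hE, Finset.insert_erase hmem1]
  have hc1 : (S.erase j₁).card + 1 = S.card := Finset.card_erase_add_one h₁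
  have hc2 : (S.erase j₂).card + 1 = S.card := Finset.card_erase_add_one h₂
  have hcT : T.card + 1 = (S.erase j₁).card := Finset.card_erase_add_one hmem2
  rw [addShapley, addShapley, addShapley, addShapley, hE]
  nth_rewrite 1 [hS1]
  rw [Finset.sum_powerset_insert hj2T]
  nth_rewrite 3 [hS2]
  rw [Finset.sum_powerset_insert hj1T, ← Finset.sum_add_distrib,
    ← Finset.sum_add_distrib, ← Finset.sum_sub_distrib, ← Finset.sum_sub_distrib]
  refine Finset.sum_congr rfl fun c hc => ?_
  have hsub : c ⊆ T := Finset.mem_powerset.mp hc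
  have hj1c : j₁ ∉ c := fun h => hj1T (hsub h)
  have hj2c : j₂ ∉ c := fun h => hj2T (hsub h)
  have hk2 : (insert j₂ c).card = c.card + 1 := Finset.card_insert_of_notMem hj2c
  have hk1 : (insert j₁ c).card = c.card + 1 := Finset.card_insert_of_notMem hj1c
  obtain ⟨m, hm⟩ : ∃ m, S.card = c.card + 2 + m :=
    ⟨T.card - c.card, by have := Finset.card_le_card hsub; omega⟩
  have her2 : (S.erase j₂).card = c.card + 1 + m := by omega
  have her1 : (S.erase j₁).card = c.card + 1 + m := by omega
  rw [hk1, hk2, hm, her1, her2, Finset.insert_comm,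
    show c.card + 2 + m - c.card - 1 = m + 1 from by omega,
    show c.card + 2 + m - (c.card + 1) - 1 = m from by omega,
    show c.card + 1 + m - c.card - 1 = m from by omega]
  have HC := coeff_id c.card m
  linear_combination (v (insert j₁ c) - v (insert j₂ c)) * HC
end
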